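/- The series of H(k)/(k(k+2)) over positive integers k converges to (1 + ζ(2))/2. -/

import Mathlib

open scoped BigOperators

/-- The harmonic number `H k = ∑_{j=1}^k 1/j`. -/
noncomputable def H (k : ℕ) : ℝ := ∑ j ∈ Finset.Icc 1 k, (1 : ℝ) / j

/-- The generalized harmonic number `H^{(p)} k = ∑_{j=1}^k 1/j^p`. -/
noncomputable def Hgen (p k : ℕ) : ℝ := ∑ j ∈ Finset.Icc 1 k, (1 : ℝ) / (j : ℝ) ^ p

/-!
Write `1/(k(k+2)) = (1/k - 1/(k+2))/2` and `H(k) = H(k+2) - 1/(k+1) - 1/(k+2)`: then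
`H(k)/k - H(k+2)/(k+2)` and `1/((k+1)(k+2))` telescope, and `1/(k+2)^2` sums to `H^{(2)}`.
Since `H(n)/n → 0` (a Cesàro mean of `1/n`), the partial sums tend to `(1 + ζ(2))/2`.
-/

open Filter Topology Real Finset

lemma H_succ (k : ℕ) : H (k + 1) = H k + 1 / (k + 1) := by
  rw [H, H, sum_Icc_succ_top (by omega)]
  push_cast; ring

lemma Hgen_succ (p k : ℕ) : Hgen p (k + 1) = Hgen p k + 1 / ((k : ℝ) + 1) ^ p := by
  rw [Hgen, Hgen, sum_Icc_succ_top (by omega)]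
  push_cast; ring

lemma H_eq_sum_range (n : ℕ) : H n = ∑ i ∈ range n, (1 : ℝ) / (i + 1) := by
  induction n with
  | zero => simp [H]
  | succ n ih => rw [H_succ, sum_range_succ, ih]

lemma Hgen_eq_sum_range {p : ℕ} (hp : p ≠ 0) (n : ℕ) :
    Hgen p n = ∑ i ∈ range (n + 1), (1 : ℝ) / (i : ℝ) ^ p := by
  induction n with
  | zero => simp [Hgen, hp]
  | succ n ih => rw [Hgen_succ, sum_range_succ _ (n + 1), ih]; push_cast; rfl

lemma H_nonneg (n : ℕ) : 0 ≤ H n := by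
  unfold H; positivity

lemma tendsto_H_div_atTop : Tendsto (fun n => H n / n) atTop (𝓝 0) :=
  tendsto_one_div_add_atTop_nhds_zero_nat.cesaro.congr fun n => by
    rw [H_eq_sum_range]; ring

lemma tendsto_Hgen_two_atTop : Tendsto (Hgen 2) atTop (𝓝 (π ^ 2 / 6)) :=
  (hasSum_zeta_two.tendsto_sum_nat.comp (tendsto_add_atTop_nat 1)).congr fun n =>
    (Hgen_eq_sum_range two_ne_zero n).symm

lemma two_mul_sum_range_H_succ_div (N : ℕ) :
    2 * ∑ k ∈ range N, H (k + 1) / (((k : ℝ) + 1) * ((k : ℝ) + 3)) =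
      1 + Hgen 2 (N + 2) - H (N + 1) / (N + 1) - H (N + 2) / (N + 2) - 1 / (N + 2) := by
  induction N with
  | zero => norm_num [H, Hgen, sum_Icc_succ_top]
  | succ N ih =>
    rw [mul_sum, sum_range_succ, ← mul_sum, ih]
    simp only [H_succ, Hgen_succ]
    push_cast
    field_simp
    ring

lemma hasSum_H_succ_div :
    HasSum (fun k : ℕ => H (k + 1) / (((k : ℝ) + 1) * ((k : ℝ) + 3))) ((1 + π ^ 2 / 6) / 2) := by
  rw [hasSum_iff_tendsto_nat_of_nonneg fun k => by have := H_nonneg (k + 1); positivity]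
  have hH (j : ℕ) : Tendsto (fun N : ℕ => H (N + j) / ((N : ℝ) + j)) atTop (𝓝 0) := by
    simpa using (tendsto_add_atTop_iff_nat j).mpr tendsto_H_div_atTop
  have hinv : Tendsto (fun N : ℕ => 1 / ((N : ℝ) + 2)) atTop (𝓝 0) := by
    simpa using (tendsto_add_atTop_iff_nat 2).mpr (tendsto_one_div_atTop_nhds_zero_nat (𝕜 := ℝ))
  have hHgen := (tendsto_add_atTop_iff_nat 2).mpr tendsto_Hgen_two_atTop
  have hlim := ((((tendsto_const_nhds (x := (1 : ℝ))).add hHgen).sub (hH 1)).sub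
    ((hH 2).add hinv)).div_const 2
  rw [sub_zero, add_zero, sub_zero] at hlim
  refine hlim.congr fun N => ?_
  push_cast
  linarith [two_mul_sum_range_H_succ_div N]

theorem euler_sum_8 :
    HasSum (fun k : ℕ => (H (k+1) : ℂ) / (((k : ℂ) + 1) * ((k : ℂ) + 3))) ((1 + riemannZeta 2) / 2) := by
  rw [riemannZeta_two]
  exact_mod_cast Complex.hasSum_ofReal.mpr hasSum_H_succ_div
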